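/- In the local bulk scaling limit, the k = 1 diagonal overlap satisfies lim_{N→∞} (1/N) · (1/π) f_{N−1}(|√N z_0 + λ|²) e^{−|√N z_0 + λ|²} = (1/π)(1 − |z_0|²) for any fixed λ ∈ ℂ and fixed z_0 ∈ ℂ with |z_0| < 1, where f_p(x) = (p+1)e_p(x) − x e_{p−1}(x) and e_p is the exponential polynomial. -/

import Mathlib

open Filter

/-- Exponential polynomial `e_p(x) = ∑_{k=0}^p x^k/k!` (real argument). -/
noncomputable def epolyR (p : ℕ) (x : ℝ) : ℝ := ∑ k ∈ Finset.range (p + 1), x ^ k / (Nat.factorial k)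

/-- `f_p(x) = (p+1) e_p(x) - x e_{p-1}(x)`, with `e_{-1} = 0`. -/
noncomputable def fpolyR (p : ℕ) (x : ℝ) : ℝ :=
  (p + 1) * epolyR p x - x * ∑ k ∈ Finset.range p, x ^ k / (Nat.factorial k)

/-!
Write `E n x = e^{-x} e_{n-1}(x)`, the probability that a Poisson variable of mean `x` is `< n`.
Then `(1/N) f_{N-1}(x) e^{-x} = E N x - (x/N) E (N-1) x`, and `x/N → |z₀|²` for
`x = |√N z₀ + λ|²`. Since `|z₀|² < 1`, both Poisson probabilities tend to `1`: the missing tail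
`e^{-x} ∑_{k ≥ n} x^k/k!` is at most a geometric multiple of `e^{-x} x^n/n! ≤ (t e^{1-t})^n`,
`t = x/n`, and `t e^{1-t}` stays below `1` for `t` bounded away from `1`.
-/

open Real Topology
open scoped Nat

noncomputable def expNegPartialSum (n : ℕ) (x : ℝ) : ℝ :=
  exp (-x) * ∑ k ∈ Finset.range n, x ^ k / k !

lemma mul_exp_one_sub_le_of_le {t c : ℝ} (ht : 0 ≤ t) (htc : t ≤ c) (hc : c ≤ 1) :
    t * exp (1 - t) ≤ c * exp (1 - c) := by
  have h : t ≤ c * exp (t - c) := by nlinarith [add_one_le_exp (t - c)]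
  calc t * exp (1 - t) ≤ c * exp (t - c) * exp (1 - t) := by gcongr
    _ = c * exp (1 - c) := by rw [mul_assoc, ← exp_add]; ring_nf

lemma mul_exp_one_sub_lt_one {c : ℝ} (hc : c ≠ 1) : c * exp (1 - c) < 1 := by
  have h : c < exp (c - 1) := by linarith [add_one_lt_exp (sub_ne_zero.mpr hc)]
  calc c * exp (1 - c) < exp (c - 1) * exp (1 - c) := by gcongr
    _ = 1 := by rw [← exp_add]; simp

lemma exp_neg_mul_pow_div_factorial_le {x : ℝ} (hx : 0 ≤ x) {n : ℕ} (hn : n ≠ 0) :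
    exp (-x) * (x ^ n / n !) ≤ (x / n * exp (1 - x / n)) ^ n := by
  calc exp (-x) * (x ^ n / n !) = exp (-x) * ((x / n) ^ n * (n ^ n / n !)) := by
        rw [div_pow]; field_simp
    _ ≤ exp (-x) * ((x / n) ^ n * exp n) := by
        gcongr; exact pow_div_factorial_le_exp _ (Nat.cast_nonneg n) n
    _ = (x / n * exp (1 - x / n)) ^ n := by
        rw [mul_pow, ← exp_nat_mul, mul_left_comm, ← exp_add]
        congr 2
        field_simp
        ring

lemma exp_sub_sum_range_le {x c : ℝ} (hx : 0 ≤ x) (hc : c < 1) {n : ℕ} (hxc : x ≤ c * (n + 1)) :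
    exp x - ∑ k ∈ Finset.range n, x ^ k / k ! ≤ x ^ n / n ! / (1 - c) := by
  set r := x / (n + 1)
  have hr0 : 0 ≤ r := by positivity
  have hrc : r ≤ c := (div_le_iff₀ (by positivity)).mpr hxc
  have htail : HasSum (fun j => x ^ (j + n) / (j + n)!) (exp x - ∑ k ∈ Finset.range n, x ^ k / k !) :=
    (hasSum_nat_add_iff' n).mpr (exp_eq_exp_ℝ ▸ NormedSpace.expSeries_div_hasSum_exp x)
  have hgeom : HasSum (fun j => x ^ n / n ! * r ^ j) (x ^ n / n ! * (1 - r)⁻¹) :=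
    (hasSum_geometric_of_lt_one hr0 (hrc.trans_lt hc)).mul_left _
  have hterm (j : ℕ) : x ^ (j + n) / (j + n)! ≤ x ^ n / n ! * r ^ j := by
    have hfac : (n ! * (n + 1) ^ j : ℝ) ≤ (j + n)! := by
      rw [add_comm j n]; exact_mod_cast Nat.factorial_mul_pow_le_factorial
    calc x ^ (j + n) / (j + n)! ≤ x ^ (j + n) / (n ! * (n + 1) ^ j) :=
          div_le_div_of_nonneg_left (by positivity) (by positivity) hfac
      _ = x ^ n / n ! * r ^ j := by rw [div_pow, pow_add]; field_simp
  calc exp x - ∑ k ∈ Finset.range n, x ^ k / k ! ≤ x ^ n / n ! * (1 - r)⁻¹ :=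
        hasSum_le hterm htail hgeom
    _ ≤ x ^ n / n ! * (1 - c)⁻¹ :=
        mul_le_mul_of_nonneg_left (inv_anti₀ (by linarith) (by linarith)) (by positivity)
    _ = x ^ n / n ! / (1 - c) := (div_eq_mul_inv _ _).symm

lemma expNegPartialSum_le_one {x : ℝ} (hx : 0 ≤ x) (n : ℕ) : expNegPartialSum n x ≤ 1 := by
  calc expNegPartialSum n x ≤ exp (-x) * exp x :=
        mul_le_mul_of_nonneg_left (sum_le_exp_of_nonneg hx n) (exp_pos _).le
    _ = 1 := by rw [← exp_add]; simp

lemma one_sub_expNegPartialSum_le {x c : ℝ} (hx : 0 ≤ x) (hc : c < 1) {n : ℕ} (hn : n ≠ 0)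
    (hxc : x ≤ c * n) : 1 - expNegPartialSum n x ≤ (c * exp (1 - c)) ^ n / (1 - c) := by
  have hn' : (0 : ℝ) < n := by positivity
  have ht : x / n ≤ c := (div_le_iff₀ hn').mpr hxc
  calc 1 - expNegPartialSum n x
        = exp (-x) * (exp x - ∑ k ∈ Finset.range n, x ^ k / k !) := by
        rw [expNegPartialSum, mul_sub, ← exp_add]; simp
    _ ≤ exp (-x) * (x ^ n / n ! / (1 - c)) := by
        gcongr; exact exp_sub_sum_range_le hx hc (by nlinarith)
    _ = exp (-x) * (x ^ n / n !) / (1 - c) := by ring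
    _ ≤ (x / n * exp (1 - x / n)) ^ n / (1 - c) :=
        div_le_div_of_nonneg_right (exp_neg_mul_pow_div_factorial_le hx hn) (by linarith)
    _ ≤ (c * exp (1 - c)) ^ n / (1 - c) := by
        refine div_le_div_of_nonneg_right (pow_le_pow_left₀ (by positivity) ?_ n) (by linarith)
        exact mul_exp_one_sub_le_of_le (by positivity) ht hc.le

lemma tendsto_expNegPartialSum {ι : Type*} {l : Filter ι} {m : ι → ℕ} {x : ι → ℝ} {a : ℝ}
    (hm : Tendsto m l atTop) (hx : ∀ i, 0 ≤ x i) (ha : a < 1)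
    (hxm : Tendsto (fun i => x i / m i) l (𝓝 a)) :
    Tendsto (fun i => expNegPartialSum (m i) (x i)) l (𝓝 1) := by
  obtain ⟨c, hc, hc1⟩ := exists_between (max_lt ha zero_lt_one)
  have hac : a < c := (le_max_left a 0).trans_lt hc
  have hc0 : 0 < c := (le_max_right a 0).trans_lt hc
  set q := c * exp (1 - c)
  have hq : Tendsto (fun i => 1 - q ^ m i / (1 - c)) l (𝓝 1) := by
    have h := ((tendsto_pow_atTop_nhds_zero_of_lt_one (by positivity)
      (mul_exp_one_sub_lt_one hc1.ne)).comp hm).div_const (1 - c)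
    simpa using tendsto_const_nhds.sub h
  have hbound : ∀ᶠ i in l, 1 - q ^ m i / (1 - c) ≤ expNegPartialSum (m i) (x i) := by
    filter_upwards [hxm.eventually_lt_const hac, hm.eventually_ge_atTop 1] with i hi hmi
    have hmi' : (0 : ℝ) < m i := by exact_mod_cast hmi
    have := one_sub_expNegPartialSum_le (hx i) hc1 (by omega) ((div_lt_iff₀ hmi').mp hi).le
    linarith
  exact tendsto_of_tendsto_of_tendsto_of_le_of_le' hq tendsto_const_nhds hbound
    (Eventually.of_forall fun i => expNegPartialSum_le_one (hx i) (m i))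

lemma tendsto_norm_sqrt_smul_add_sq_div {E : Type*} [SeminormedAddCommGroup E] [NormedSpace ℝ E]
    (z w : E) : Tendsto (fun N : ℕ => ‖√N • z + w‖ ^ 2 / N) atTop (𝓝 (‖z‖ ^ 2)) := by
  have hinv : Tendsto (fun N : ℕ => (√N)⁻¹) atTop (𝓝 0) :=
    tendsto_inv_atTop_zero.comp (tendsto_sqrt_atTop.comp tendsto_natCast_atTop_atTop)
  have hcont : Continuous fun s : ℝ => ‖z + s • w‖ ^ 2 := by fun_prop
  have h := (hcont.tendsto 0).comp hinv
  simp only [zero_smul, add_zero] at h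
  refine h.congr' ?_
  filter_upwards [eventually_ne_atTop 0] with N hN
  have hs : 0 < √(N : ℝ) := sqrt_pos.mpr (by positivity)
  have hfac : √N • z + w = √N • (z + (√N)⁻¹ • w) := by
    rw [smul_add, smul_inv_smul₀ hs.ne']
  simp only [Function.comp_apply, hfac, norm_smul, norm_of_nonneg hs.le, mul_pow,
    sq_sqrt (Nat.cast_nonneg N)]
  field_simp

lemma Filter.Tendsto.div_natCast_sub_one {y : ℕ → ℝ} {a : ℝ}
    (h : Tendsto (fun N => y N / N) atTop (𝓝 a)) :
    Tendsto (fun N => y N / (N - 1 : ℕ)) atTop (𝓝 a) := by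
  have h1 : Tendsto (fun N : ℕ => (N : ℝ) / (N + -1)) atTop (𝓝 1) := tendsto_natCast_div_add_atTop _
  refine (mul_one a ▸ h.mul h1).congr' ?_
  filter_upwards [eventually_ne_atTop 0] with N hN
  rw [Nat.cast_sub (Nat.one_le_iff_ne_zero.mpr hN), Nat.cast_one, ← sub_eq_add_neg,
    div_mul_div_cancel₀ (Nat.cast_ne_zero.mpr hN)]

lemma one_div_natCast_mul_fpolyR_sub_one_mul_exp_neg {N : ℕ} (hN : N ≠ 0) (x : ℝ) :
    1 / N * (fpolyR (N - 1) x * exp (-x))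
      = expNegPartialSum N x - x / N * expNegPartialSum (N - 1) x := by
  have hN' : ((N - 1 : ℕ) : ℝ) + 1 = N := by
    rw [Nat.cast_sub (Nat.one_le_iff_ne_zero.mpr hN)]; ring
  rw [fpolyR, epolyR, Nat.sub_add_cancel (Nat.one_le_iff_ne_zero.mpr hN), hN', expNegPartialSum,
    expNegPartialSum]
  field_simp

/-- Bulk scaling limit of the `k = 1` diagonal overlap:
`lim_N (1/N)(1/π) f_{N-1}(|√N z₀ + λ|²) e^{-|√N z₀ + λ|²} = (1/π)(1-|z₀|²)`. -/
theorem bulk_limit_diag_overlap_k1 (z₀ lam : ℂ) (hz : ‖z₀‖ < 1) :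
    Tendsto (fun N : ℕ =>
        (1 / (N : ℝ)) * ((1 / Real.pi) *
          fpolyR (N - 1) (‖(Real.sqrt N : ℂ) * z₀ + lam‖ ^ 2) *
          Real.exp (-(‖(Real.sqrt N : ℂ) * z₀ + lam‖ ^ 2))))
      atTop (nhds ((1 / Real.pi) * (1 - ‖z₀‖ ^ 2))) := by
  set x : ℕ → ℝ := fun N => ‖(√N : ℂ) * z₀ + lam‖ ^ 2
  have hx (N : ℕ) : 0 ≤ x N := sq_nonneg _
  have ha : ‖z₀‖ ^ 2 < 1 := pow_lt_one₀ (norm_nonneg _) hz two_ne_zero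
  have hlim : Tendsto (fun N => x N / N) atTop (𝓝 (‖z₀‖ ^ 2)) := by
    simpa only [x, Complex.real_smul] using tendsto_norm_sqrt_smul_add_sq_div z₀ lam
  have hE : Tendsto (fun N => expNegPartialSum N (x N)) atTop (𝓝 1) :=
    tendsto_expNegPartialSum tendsto_id hx ha hlim
  have hE' := tendsto_expNegPartialSum (tendsto_sub_atTop_nat 1) hx ha hlim.div_natCast_sub_one
  have h := (hE.sub (hlim.mul hE')).const_mul (1 / π)
  rw [mul_one] at h
  refine h.congr' ?_
  filter_upwards [eventually_ne_atTop 0] with N hN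
  rw [mul_assoc (1 / π), mul_left_comm, one_div_natCast_mul_fpolyR_sub_one_mul_exp_neg hN]
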